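/- arXiv:math/0009230 — 2 statements merged into one kernel-verified Lean document; each statement's English description precedes it below -/
import Mathlib

section
/- Let n be a positive integer, j₁, j₂ ∈ Z_n, and positive integers b₁, a₁, b₂ with b₁ + a₁ < n/2 and b₂ < n/2. Suppose j₂ ⪯ j₁ - b₁ (circular relation on Z_n) and j₂ ≺ j₁. Then the sets {j₁ - x mod n : 0 ≤ x ≤ b₁ - 1} and {j₂ - y mod n : 1 ≤ y ≤ b₂} are disjoint. -/
/-! A common element `j₁ - x = j₂ - y` gives `j₁ = j₂ + (x - y)`. If `x ≥ y`, then
`j₁ - b₁ = j₂ - k` with `0 < k = b₁ - (x - y) ≤ b₁`; if `x < y`, then `j₁ = j₂ - k` with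
`0 < k = y - x ≤ b₂`. Either way some `j₂ - k` with `0 < k < n/2` would lie in the forward
half-circle of `j₂`, which it does not. -/

/-- The circular relation on `ZMod n`: `i ⪯ j` iff `(j - i) mod n ∈ {0, ..., ⌊n/2⌋}`. -/
def crel (n : ℕ) (i j : ZMod n) : Prop := (j - i).val ≤ n / 2

theorem not_crel_sub_natCast {n k : ℕ} (i : ZMod n) (hk : 0 < k) (hkn : 2 * k < n) :
    ¬ crel n i (i - k) := by
  have : NeZero n := ⟨by omega⟩
  have hk_val : (k : ZMod n).val = k := ZMod.val_cast_of_lt (by omega)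
  have hk_ne : (k : ZMod n) ≠ 0 := by
    rw [Ne, ← ZMod.val_eq_zero, hk_val]
    omega
  rw [crel, sub_sub_cancel_left, ZMod.neg_val, if_neg hk_ne, hk_val]
  omega

theorem stmt_4_general (n : ℕ) (j₁ j₂ : ZMod n) (b₁ a₁ b₂ : ℕ)
    (h1 : 2 * (b₁ + a₁) < n) (h2 : 2 * b₂ < n)
    (hpre : crel n j₂ (j₁ - (b₁ : ZMod n)))
    (hlt : crel n j₂ j₁ ∧ j₂ ≠ j₁) :
    ∀ x y : ℕ, x ≤ b₁ - 1 → 1 ≤ y → y ≤ b₂ →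
      j₁ - (x : ZMod n) ≠ j₂ - (y : ZMod n) := by
  intro x y hx hy1 hy2 heq
  rcases le_or_gt y x with hyx | hxy
  · have hb : j₁ - b₁ = j₂ - ((b₁ - (x - y) : ℕ) : ZMod n) := by
      rw [Nat.cast_sub (by omega), Nat.cast_sub hyx]
      linear_combination heq
    exact not_crel_sub_natCast j₂ (by omega) (by omega) (hb ▸ hpre)
  · have hj : j₁ = j₂ - ((y - x : ℕ) : ZMod n) := by
      rw [Nat.cast_sub hxy.le]
      linear_combination heq
    exact not_crel_sub_natCast j₂ (by omega) (by omega) (hj ▸ hlt.1)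

/-- Index-set disjointness underlying Proposition 6(iv): if `j₂ ⪯ j₁ - b₁` and `j₂ ≺ j₁`,
then `{j₁ - x : 0 ≤ x ≤ b₁ - 1}` and `{j₂ - y : 1 ≤ y ≤ b₂}` are disjoint. -/
theorem stmt_4 (n : ℕ) (hn : 0 < n) (j₁ j₂ : ZMod n) (b₁ a₁ b₂ : ℕ)
    (hb₁ : 0 < b₁) (ha₁ : 0 < a₁) (hb₂ : 0 < b₂)
    (h1 : 2 * (b₁ + a₁) < n) (h2 : 2 * b₂ < n)
    (hpre : crel n j₂ (j₁ - (b₁ : ZMod n)))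
    (hlt : crel n j₂ j₁ ∧ j₂ ≠ j₁) :
    ∀ x y : ℕ, x ≤ b₁ - 1 → 1 ≤ y → y ≤ b₂ →
      j₁ - (x : ZMod n) ≠ j₂ - (y : ZMod n) :=
  stmt_4_general n j₁ j₂ b₁ a₁ b₂ h1 h2 hpre hlt
end

section
/- Let m ≥ 3 and n be integers with n ≥ (m+3)²/2 + 1. Consider n objects (red cycles) indexed by Z_n, and a symmetric 'crossing' relation among them such that each object crosses at most (m-1)/2 others. Then: (a) for each j ∈ Z_n there exists b with 0 < b ≤ (m+1)/2 such that R(j - b) does not cross R(j) (taking b(j) minimal such); (b) for each j there exists a with 0 < a ≤ (m+1)(m+3)/4 + 1 such that R(j + a) crosses none of R(j - b(j)), ..., R(j) (taking a(j) minimal such); and (c) b(j) + a(j) < n/2 for all j. -/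
/-!
Pigeonhole twice. The cycles `R(j-1), …, R(j-d-1)` with `d = (m-1)/2` are `d + 1` distinct cycles
other than `R(j)`, while `R(j)` crosses at most `d` others, so one of them misses `R(j)`; this
gives `b(j) ≤ d + 1 ≤ (m+1)/2`. The `b(j) + 1` cycles `R(j-b(j)), …, R(j)` cross at most
`(b(j) + 1) d ≤ (m+1)(m+3)/4` cycles in total, so among the `(m+1)(m+3)/4 + 1` distinct cycles
`R(j+1), R(j+2), …` (none of which is an `R(j-c)`, since `n` is large) one crosses none of them.
The bound `b(j) + a(j) < n/2` is then arithmetic.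
-/

open Set

def otherNeighbors {α : Type*} (r : α → α → Prop) (i : α) : Set α := {k | r i k ∧ k ≠ i}

lemma exists_pos_le_apply_notMem {α : Type*} [Finite α] {f : ℕ → α} {N : ℕ}
    (hf : InjOn f (Icc 1 N)) {S : Set α} (hS : S.ncard < N) :
    ∃ x, 0 < x ∧ x ≤ N ∧ f x ∉ S := by
  by_contra! h
  have hle := ncard_le_ncard_of_injOn f (fun x hx ↦ h x hx.1 hx.2) hf
  rw [ncard_Icc_nat] at hle
  omega

lemma exists_minimal_pos {P : ℕ → Prop} {N : ℕ} (h : ∃ x, 0 < x ∧ x ≤ N ∧ P x) :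
    ∃ x, 0 < x ∧ x ≤ N ∧ P x ∧ ∀ y, 0 < y → y < x → ¬ P y := by
  classical
  have hex : ∃ x, 0 < x ∧ P x := h.imp fun _ hx ↦ ⟨hx.1, hx.2.2⟩
  obtain ⟨hpos, hP⟩ := Nat.find_spec hex
  obtain ⟨x, hx, hxN, hPx⟩ := h
  exact ⟨Nat.find hex, hpos, (Nat.find_min' hex ⟨hx, hPx⟩).trans hxN, hP,
    fun y hy hyx hPy ↦ Nat.find_min hex hyx ⟨hy, hPy⟩⟩

namespace ZMod

variable {n : ℕ}

lemma natCast_ne_zero_of_pos_of_lt {a : ℕ} (ha : 0 < a) (han : a < n) : (a : ZMod n) ≠ 0 := by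
  rw [Ne, natCast_eq_zero_iff]
  exact fun hdvd ↦ (Nat.le_of_dvd ha hdvd).not_gt han

lemma injOn_sub_natCast_Icc (j : ZMod n) {N : ℕ} (hN : N < n) :
    InjOn (fun b : ℕ ↦ j - b) (Icc 1 N) :=
  (sub_right_injective (b := j)).comp_injOn <|
    (CharP.natCast_injOn_Iio (ZMod n) n).mono fun _ hb ↦ lt_of_le_of_lt hb.2 hN

lemma injOn_add_natCast_Icc (j : ZMod n) {N : ℕ} (hN : N < n) :
    InjOn (fun a : ℕ ↦ j + a) (Icc 1 N) :=
  (add_right_injective j).comp_injOn <|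
    (CharP.natCast_injOn_Iio (ZMod n) n).mono fun _ ha ↦ lt_of_le_of_lt ha.2 hN

variable [NeZero n] {r : ZMod n → ZMod n → Prop} {d : ℕ}

lemma exists_sub_natCast_not_rel (hsymm : ∀ j k, r j k → r k j)
    (hdeg : ∀ i, (otherNeighbors r i).ncard ≤ d) (hdn : d + 1 < n) (j : ZMod n) :
    ∃ b, 0 < b ∧ b ≤ d + 1 ∧ ¬ r (j - b) j := by
  obtain ⟨b, hb, hbd, hnot⟩ := exists_pos_le_apply_notMem (injOn_sub_natCast_Icc j hdn)
    (Nat.lt_succ_of_le (hdeg j))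
  refine ⟨b, hb, hbd, fun hrel ↦ hnot ⟨hsymm _ _ hrel, ?_⟩⟩
  simpa using natCast_ne_zero_of_pos_of_lt hb (by omega)

lemma exists_add_natCast_forall_not_rel (hdeg : ∀ i, (otherNeighbors r i).ncard ≤ d)
    (j : ZMod n) {b A : ℕ} (hA : (b + 1) * d < A) (hAn : A + b < n) :
    ∃ a, 0 < a ∧ a ≤ A ∧ ∀ c ≤ b, ¬ r (j - c) (j + a) := by
  have hcard : (⋃ c ∈ Finset.range (b + 1), otherNeighbors r (j - c)).ncard < A :=
    calc _ ≤ ∑ c ∈ Finset.range (b + 1), (otherNeighbors r (j - c)).ncard :=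
          Finset.set_ncard_biUnion_le _ _
      _ ≤ ∑ _c ∈ Finset.range (b + 1), d := Finset.sum_le_sum fun _ _ ↦ hdeg _
      _ = (b + 1) * d := by simp
      _ < A := hA
  obtain ⟨a, ha, haA, hnot⟩ :=
    exists_pos_le_apply_notMem (injOn_add_natCast_Icc j (by omega : A < n)) hcard
  refine ⟨a, ha, haA, fun c hc hrel ↦ hnot (mem_biUnion (Finset.mem_range.2 (by omega))
    ⟨hrel, fun heq ↦ ?_⟩)⟩
  have hsum : ((a + c : ℕ) : ZMod n) = 0 := by
    push_cast
    linear_combination heq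
  exact natCast_ne_zero_of_pos_of_lt (by omega) (by omega) hsum

end ZMod

lemma mul_half_pred_le {m b : ℕ} (hb : 2 * b ≤ m + 1) :
    (b + 1) * ((m - 1) / 2) ≤ (m + 1) * (m + 3) / 4 := by
  rw [Nat.le_div_iff_mul_le (by norm_num)]
  calc (b + 1) * ((m - 1) / 2) * 4 = (2 * b + 2) * (2 * ((m - 1) / 2)) := by ring
    _ ≤ (m + 3) * (m + 1) := Nat.mul_le_mul (by omega) (by omega)
    _ = (m + 1) * (m + 3) := by ring

/-- Combinatorial core of Proposition 13.  Given `m ≥ 3`, `n ≥ (m+3)²/2 + 1`, and a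
symmetric crossing relation on `n` red cycles indexed by `ZMod n` in which each cycle
crosses at most `(m-1)/2` others, then for each `j` there are minimal `b(j)` and `a(j)`
with: `0 < b(j) ≤ (m+1)/2` and `R(j - b(j))` does not cross `R(j)`;
`0 < a(j) ≤ (m+1)(m+3)/4 + 1` and `R(j + a(j))` crosses none of
`R(j - b(j)), …, R(j)`; and `b(j) + a(j) < n/2`. -/
theorem stmt_11 (m n : ℕ) (hm : 3 ≤ m) (hn : 2 * n ≥ (m + 3) ^ 2 + 2)
    (cross : ZMod n → ZMod n → Prop)
    (hsymm : ∀ j k, cross j k → cross k j)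
    (hdeg : ∀ j, {k : ZMod n | cross j k ∧ k ≠ j}.ncard ≤ (m - 1) / 2) :
    ∀ j : ZMod n, ∃ b a : ℕ,
      -- (a): minimal b with 0 < b ≤ (m+1)/2 and R(j-b) not crossing R(j)
      (0 < b ∧ 2 * b ≤ m + 1 ∧ ¬ cross (j - (b : ZMod n)) j ∧
        (∀ b' : ℕ, 0 < b' → b' < b → cross (j - (b' : ZMod n)) j)) ∧
      -- (b): minimal a with 0 < a ≤ (m+1)(m+3)/4 + 1 and R(j+a) crossing none of
      -- R(j-b), ..., R(j)
      (0 < a ∧ 4 * a ≤ (m + 1) * (m + 3) + 4 ∧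
        (∀ c : ℕ, c ≤ b → ¬ cross (j - (c : ZMod n)) (j + (a : ZMod n))) ∧
        (∀ a' : ℕ, 0 < a' → a' < a →
          ∃ c : ℕ, c ≤ b ∧ cross (j - (c : ZMod n)) (j + (a' : ZMod n)))) ∧
      -- (c): b + a < n/2
      2 * (b + a) < n := by
  intro j
  have hsq : (m + 3) ^ 2 = (m + 1) * (m + 3) + 2 * m + 6 := by ring
  have : NeZero n := ⟨by omega⟩
  obtain ⟨b, hb, hbd, hbnot, hbmin⟩ :=
    exists_minimal_pos (ZMod.exists_sub_natCast_not_rel hsymm hdeg (by omega) j)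
  have hb2 : 2 * b ≤ m + 1 := by omega
  set A := (m + 1) * (m + 3) / 4 + 1
  have hA4 : 4 * A ≤ (m + 1) * (m + 3) + 4 := by omega
  obtain ⟨a, ha, haA, hanot, hamin⟩ := exists_minimal_pos
    (ZMod.exists_add_natCast_forall_not_rel hdeg j
      (Nat.lt_succ_of_le (mul_half_pred_le hb2)) (by omega))
  refine ⟨b, a, ⟨hb, hb2, hbnot, fun b' hb' hb'b ↦ not_not.1 (hbmin b' hb' hb'b)⟩,
    ⟨ha, by omega, hanot, fun a' ha' ha'a ↦ ?_⟩, by omega⟩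
  simpa using hamin a' ha' ha'a
end
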